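/- arXiv:2204.07389 — 5 statements merged into one kernel-verified Lean document; each statement's English description precedes it below -/
import Mathlib

section
/- Let 0 < θ < 1 and 0 < ζ < 1. Then there exists r_θ ∈ (0,1), depending only on θ and ζ, such that for all r ∈ (0, r_θ) and all z ≥ 1/(θ r), one has log(r z) ≥ r^ζ · log(z). -/
/-!
Write `log (r z) - r^ζ log z = log r + (1 - r^ζ) log z`; for `r < 1` this is increasing in `z`,
so it suffices to check `z = 1 / (θ r)`, where it becomes `r^ζ log (1 / (θ r)) ≤ log (1 / θ)`.
The left side tends to `0` as `r → 0⁺`, since `r^ζ log r → 0`, while the right side is a positive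
constant because `θ < 1`.
-/

open Real Filter Topology

lemma mul_log_le_log_mul_of_le {r a w z : ℝ} (hr : 0 < r) (ha : a ≤ 1) (hw : 0 < w)
    (hwz : w ≤ z) (h : a * log w ≤ log (r * w)) : a * log z ≤ log (r * z) := by
  have hz : 0 < z := hw.trans_le hwz
  rw [log_mul hr.ne' hw.ne'] at h
  rw [log_mul hr.ne' hz.ne']
  nlinarith [log_le_log hw hwz]

lemma tendsto_rpow_mul_log_const_mul_nhdsGT_zero {ζ : ℝ} (hζ : 0 < ζ) {θ : ℝ} (hθ : θ ≠ 0) :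
    Tendsto (fun r => r ^ ζ * log (θ * r)) (𝓝[>] 0) (𝓝 0) := by
  have hrpow : Tendsto (fun r : ℝ => r ^ ζ) (𝓝[>] 0) (𝓝 0) := by
    simpa [zero_rpow hζ.ne'] using
      (continuousAt_rpow_const 0 ζ (.inr hζ.le)).tendsto.mono_left nhdsWithin_le_nhds
  have hsum := (hrpow.const_mul (log θ)).add (tendsto_log_mul_rpow_nhdsGT_zero hζ)
  rw [mul_zero, zero_add] at hsum
  refine hsum.congr' (eventually_nhdsWithin_of_forall fun r (hr : 0 < r) => ?_)
  simp only [log_mul hθ hr.ne']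
  ring

theorem log_scale_inequality_general (θ ζ : ℝ) (hθ : 0 < θ) (hθ1 : θ < 1)
    (hζ : 0 < ζ) :
    ∃ rθ : ℝ, 0 < rθ ∧ rθ < 1 ∧
      ∀ r : ℝ, 0 < r → r < rθ →
        ∀ z : ℝ, 1 / (θ * r) ≤ z →
          Real.log (r * z) ≥ r ^ ζ * Real.log z := by
  have hlogθ : 0 < log (1 / θ) := log_pos (one_lt_one_div hθ hθ1)
  have hsmall : ∀ᶠ r in 𝓝[>] 0, r ^ ζ * log (1 / (θ * r)) ≤ log (1 / θ) := by
    have hlim := (tendsto_rpow_mul_log_const_mul_nhdsGT_zero hζ hθ.ne').neg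
    rw [neg_zero] at hlim
    refine (hlim.eventually (ge_mem_nhds hlogθ)).mono fun r hr => ?_
    rwa [one_div, log_inv, mul_neg]
  obtain ⟨u, hu, hsmall⟩ := (nhdsGT_basis 0).eventually_iff.1 hsmall
  refine ⟨min u (1 / 2), by positivity, by linarith [min_le_right u (1 / 2)], ?_⟩
  intro r hr hru z hz
  have hr1 : r < 1 := by linarith [min_le_right u (1 / 2)]
  have hrw : log (r * (1 / (θ * r))) = log (1 / θ) := by
    congr 1
    field_simp
  refine mul_log_le_log_mul_of_le hr (rpow_le_one hr.le hr1.le hζ.le) (by positivity) hz ?_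
  rw [hrw]
  exact hsmall ⟨hr, hru.trans_le (min_le_left u (1 / 2))⟩

theorem log_scale_inequality (θ ζ : ℝ) (hθ : 0 < θ) (hθ1 : θ < 1)
    (hζ : 0 < ζ) (hζ1 : ζ < 1) :
    ∃ rθ : ℝ, 0 < rθ ∧ rθ < 1 ∧
      ∀ r : ℝ, 0 < r → r < rθ →
        ∀ z : ℝ, 1 / (θ * r) ≤ z →
          Real.log (r * z) ≥ r ^ ζ * Real.log z :=
  log_scale_inequality_general θ ζ hθ hθ1 hζ
end

section
/- Let Ψ : (0,∞) → (0,∞) satisfy the global weak scaling property: there exist 0 < μ₁ ≤ μ₂ < 1 and constants c₁, c₂ > 0 with c₁ λ^{μ₁} Ψ(s) ≤ Ψ(λ s) ≤ c₂ λ^{μ₂} Ψ(s) for all s > 0 and λ ≥ 1. Define k(y) = Ψ(|y|^{−2})/|y|ⁿ for y ∈ ℝⁿ \ {0}. Then there exists C > 0 such that for all r ∈ (0,1] and all y ≠ 0, r^{n+2μ₂} k(ry) ≤ C ( 1_{|y|≤1} Ψ(1) |y|^{−n−2μ₂} + 1_{|y|>1} Ψ(1) |y|^{−n−2μ₁} ).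 -/
/-!
Write `t = r‖y‖` and `a = ‖y‖`, so that `r^{n+2μ₂} k(ry) = r^{2μ₂} Ψ(t⁻²) / aⁿ`.
If `t ≤ 1`, upper scaling from `1` to `t⁻² ≥ 1` gives `Ψ(t⁻²) ≤ c₂ t^{-2μ₂} Ψ(1)`, and the factor
`r^{2μ₂}` turns `t^{-2μ₂}` into `a^{-2μ₂}`, which is at most `a^{-2μ₁}` once `a > 1`.
If `t > 1` (hence `a > 1`), lower scaling from `t⁻²` to `1` gives `Ψ(t⁻²) ≤ c₁⁻¹ t^{-2μ₁} Ψ(1)`, and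
`r^{2μ₂} t^{-2μ₁} = r^{2(μ₂-μ₁)} a^{-2μ₁} ≤ a^{-2μ₁}`.
-/

open Real

section WeakScaling

variable {Ψ : ℝ → ℝ} {μ c : ℝ}

theorem apply_le_inv_mul_rpow_mul_of_lowerScaling (hc : 0 < c)
    (hlow : ∀ s : ℝ, 0 < s → ∀ lam : ℝ, 1 ≤ lam → c * lam ^ μ * Ψ s ≤ Ψ (lam * s))
    {s : ℝ} (hs : 0 < s) (hs1 : s ≤ 1) : Ψ s ≤ c⁻¹ * s ^ μ * Ψ 1 := by
  have h := hlow s hs s⁻¹ ((one_le_inv₀ hs).2 hs1)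
  rw [inv_mul_cancel₀ hs.ne', inv_rpow hs.le] at h
  have hsμ : 0 < s ^ μ := rpow_pos_of_pos hs μ
  calc Ψ s = c⁻¹ * s ^ μ * (c * (s ^ μ)⁻¹ * Ψ s) := by field_simp
    _ ≤ c⁻¹ * s ^ μ * Ψ 1 := by gcongr

theorem apply_rpow_neg_two_le_of_upperScaling
    (hup : ∀ s : ℝ, 0 < s → ∀ lam : ℝ, 1 ≤ lam → Ψ (lam * s) ≤ c * lam ^ μ * Ψ s)
    {t : ℝ} (ht : 0 < t) (ht1 : t ≤ 1) : Ψ (t ^ (-(2 : ℝ))) ≤ c * t ^ (-(2 * μ)) * Ψ 1 := by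
  have h := hup 1 one_pos (t ^ (-(2 : ℝ)))
    (one_le_rpow_of_pos_of_le_one_of_nonpos ht ht1 (by norm_num))
  rwa [mul_one, ← rpow_mul ht.le, neg_mul] at h

theorem apply_rpow_neg_two_le_of_lowerScaling (hc : 0 < c)
    (hlow : ∀ s : ℝ, 0 < s → ∀ lam : ℝ, 1 ≤ lam → c * lam ^ μ * Ψ s ≤ Ψ (lam * s))
    {t : ℝ} (ht : 1 ≤ t) : Ψ (t ^ (-(2 : ℝ))) ≤ c⁻¹ * t ^ (-(2 * μ)) * Ψ 1 := by
  have h := apply_le_inv_mul_rpow_mul_of_lowerScaling hc hlow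
    (rpow_pos_of_pos (by linarith) (-(2 : ℝ))) (rpow_le_one_of_one_le_of_nonpos ht (by norm_num))
  rwa [← rpow_mul (by linarith), neg_mul] at h

end WeakScaling

theorem rpow_mul_mul_rpow_neg_le {r a μ ν : ℝ} (hr : 0 < r) (hr1 : r ≤ 1) (ha : 0 < a)
    (hμν : μ ≤ ν) : r ^ ν * (r * a) ^ (-μ) ≤ a ^ (-μ) := by
  have hsplit : r ^ ν * (r * a) ^ (-μ) = r ^ (ν - μ) * a ^ (-μ) := by
    rw [mul_rpow hr.le ha.le, ← mul_assoc, ← rpow_add hr, sub_eq_add_neg]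
  rw [hsplit]
  exact mul_le_of_le_one_left (rpow_nonneg ha.le _) (rpow_le_one hr.le hr1 (by linarith))

section KernelBound

variable {Ψ : ℝ → ℝ} {μ₁ μ₂ c₁ c₂ r a : ℝ}

theorem rpow_mul_apply_le_of_mul_le_one
    (hup : ∀ s : ℝ, 0 < s → ∀ lam : ℝ, 1 ≤ lam → Ψ (lam * s) ≤ c₂ * lam ^ μ₂ * Ψ s)
    (hc₂ : 0 ≤ c₂) (hΨ1 : 0 ≤ Ψ 1) (hr : 0 < r) (hr1 : r ≤ 1) (ha : 0 < a) (hra : r * a ≤ 1) :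
    r ^ (2 * μ₂) * Ψ ((r * a) ^ (-(2 : ℝ))) ≤ c₂ * Ψ 1 * a ^ (-(2 * μ₂)) := by
  calc r ^ (2 * μ₂) * Ψ ((r * a) ^ (-(2 : ℝ)))
      ≤ r ^ (2 * μ₂) * (c₂ * (r * a) ^ (-(2 * μ₂)) * Ψ 1) := by
        gcongr
        exact apply_rpow_neg_two_le_of_upperScaling hup (mul_pos hr ha) hra
    _ = c₂ * Ψ 1 * (r ^ (2 * μ₂) * (r * a) ^ (-(2 * μ₂))) := by ring
    _ ≤ c₂ * Ψ 1 * a ^ (-(2 * μ₂)) := by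
        gcongr
        exact rpow_mul_mul_rpow_neg_le hr hr1 ha le_rfl

theorem rpow_mul_apply_le_of_one_le_mul (hc₁ : 0 < c₁)
    (hlow : ∀ s : ℝ, 0 < s → ∀ lam : ℝ, 1 ≤ lam → c₁ * lam ^ μ₁ * Ψ s ≤ Ψ (lam * s))
    (hμ : μ₁ ≤ μ₂) (hΨ1 : 0 ≤ Ψ 1) (hr : 0 < r) (hr1 : r ≤ 1) (ha : 0 < a) (hra : 1 ≤ r * a) :
    r ^ (2 * μ₂) * Ψ ((r * a) ^ (-(2 : ℝ))) ≤ c₁⁻¹ * Ψ 1 * a ^ (-(2 * μ₁)) := by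
  calc r ^ (2 * μ₂) * Ψ ((r * a) ^ (-(2 : ℝ)))
      ≤ r ^ (2 * μ₂) * (c₁⁻¹ * (r * a) ^ (-(2 * μ₁)) * Ψ 1) := by
        gcongr
        exact apply_rpow_neg_two_le_of_lowerScaling hc₁ hlow hra
    _ = c₁⁻¹ * Ψ 1 * (r ^ (2 * μ₂) * (r * a) ^ (-(2 * μ₁))) := by ring
    _ ≤ c₁⁻¹ * Ψ 1 * a ^ (-(2 * μ₁)) := by
        gcongr
        exact rpow_mul_mul_rpow_neg_le hr hr1 ha (by linarith)

theorem rpow_mul_apply_le_max_mul_ite (hc₁ : 0 < c₁) (hc₂ : 0 ≤ c₂)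
    (hup : ∀ s : ℝ, 0 < s → ∀ lam : ℝ, 1 ≤ lam → Ψ (lam * s) ≤ c₂ * lam ^ μ₂ * Ψ s)
    (hlow : ∀ s : ℝ, 0 < s → ∀ lam : ℝ, 1 ≤ lam → c₁ * lam ^ μ₁ * Ψ s ≤ Ψ (lam * s))
    (hμ : μ₁ ≤ μ₂) (hΨ1 : 0 ≤ Ψ 1) (hr : 0 < r) (hr1 : r ≤ 1) (ha : 0 < a) :
    r ^ (2 * μ₂) * Ψ ((r * a) ^ (-(2 : ℝ))) ≤
      max c₂ c₁⁻¹ * Ψ 1 * (if a ≤ 1 then a ^ (-(2 * μ₂)) else a ^ (-(2 * μ₁))) := by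
  have hc₂C : c₂ * Ψ 1 ≤ max c₂ c₁⁻¹ * Ψ 1 := by gcongr; exact le_max_left _ _
  split_ifs with ha1
  · have hra : r * a ≤ 1 := mul_le_one₀ hr1 ha.le ha1
    exact (rpow_mul_apply_le_of_mul_le_one hup hc₂ hΨ1 hr hr1 ha hra).trans (by gcongr)
  rcases le_or_gt (r * a) 1 with hra | hra
  · calc r ^ (2 * μ₂) * Ψ ((r * a) ^ (-(2 : ℝ))) ≤ c₂ * Ψ 1 * a ^ (-(2 * μ₂)) :=
          rpow_mul_apply_le_of_mul_le_one hup hc₂ hΨ1 hr hr1 ha hra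
      _ ≤ max c₂ c₁⁻¹ * Ψ 1 * a ^ (-(2 * μ₁)) := by
          gcongr
          exact (not_le.1 ha1).le
  · calc r ^ (2 * μ₂) * Ψ ((r * a) ^ (-(2 : ℝ))) ≤ c₁⁻¹ * Ψ 1 * a ^ (-(2 * μ₁)) :=
          rpow_mul_apply_le_of_one_le_mul hc₁ hlow hμ hΨ1 hr hr1 ha hra.le
      _ ≤ max c₂ c₁⁻¹ * Ψ 1 * a ^ (-(2 * μ₁)) := by gcongr; exact le_max_right _ _

end KernelBound

theorem subordinate_kernel_scaling_general (n : ℕ)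
    (Ψ : ℝ → ℝ) (μ₁ μ₂ c₁ c₂ : ℝ)
    (hμ₁₂ : μ₁ ≤ μ₂)
    (hc₁ : 0 < c₁) (hc₂ : 0 < c₂)
    (hΨpos : ∀ s : ℝ, 0 < s → 0 < Ψ s)
    (hscale : ∀ s : ℝ, 0 < s → ∀ lam : ℝ, 1 ≤ lam →
      c₁ * lam ^ μ₁ * Ψ s ≤ Ψ (lam * s) ∧ Ψ (lam * s) ≤ c₂ * lam ^ μ₂ * Ψ s)
    (k : EuclideanSpace ℝ (Fin n) → ℝ)
    (hk : ∀ y : EuclideanSpace ℝ (Fin n), y ≠ 0 →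
      k y = Ψ (‖y‖ ^ (-(2 : ℝ))) / ‖y‖ ^ (n : ℝ)) :
    ∃ C : ℝ, 0 < C ∧
      ∀ r : ℝ, 0 < r → r ≤ 1 → ∀ y : EuclideanSpace ℝ (Fin n), y ≠ 0 →
        r ^ ((n : ℝ) + 2 * μ₂) * k (r • y) ≤
          C * ((if ‖y‖ ≤ 1 then Ψ 1 * ‖y‖ ^ (-((n : ℝ) + 2 * μ₂)) else 0) +
               (if 1 < ‖y‖ then Ψ 1 * ‖y‖ ^ (-((n : ℝ) + 2 * μ₁)) else 0)) := by
  refine ⟨max c₂ c₁⁻¹, lt_max_of_lt_right (inv_pos.2 hc₁), fun r hr hr1 y hy => ?_⟩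
  rw [hk _ (smul_ne_zero hr.ne' hy), norm_smul, norm_of_nonneg hr.le]
  have ha : 0 < ‖y‖ := norm_pos_iff.2 hy
  generalize ‖y‖ = a at ha ⊢
  have hbound := rpow_mul_apply_le_max_mul_ite hc₁ hc₂.le
    (fun s hs lam hlam => (hscale s hs lam hlam).2) (fun s hs lam hlam => (hscale s hs lam hlam).1)
    hμ₁₂ (hΨpos 1 one_pos).le hr hr1 ha
  have hsplit (e : ℝ) : a ^ (-((n : ℝ) + e)) = a ^ (-e) / a ^ (n : ℝ) := by
    rw [neg_add, rpow_add ha, rpow_neg ha.le (n : ℝ)]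
    ring
  calc r ^ ((n : ℝ) + 2 * μ₂) * (Ψ ((r * a) ^ (-(2 : ℝ))) / (r * a) ^ (n : ℝ))
      = r ^ (2 * μ₂) * Ψ ((r * a) ^ (-(2 : ℝ))) / a ^ (n : ℝ) := by
        rw [rpow_add hr, mul_rpow hr.le ha.le (z := (n : ℝ))]
        field_simp
    _ ≤ max c₂ c₁⁻¹ * Ψ 1 * (if a ≤ 1 then a ^ (-(2 * μ₂)) else a ^ (-(2 * μ₁))) /
        a ^ (n : ℝ) := by gcongr
    _ = _ := by split_ifs <;> first | linarith | (rw [hsplit]; ring)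

theorem subordinate_kernel_scaling (n : ℕ) (hn : 1 ≤ n)
    (Ψ : ℝ → ℝ) (μ₁ μ₂ c₁ c₂ : ℝ)
    (hμ₁ : 0 < μ₁) (hμ₁₂ : μ₁ ≤ μ₂) (hμ₂ : μ₂ < 1)
    (hc₁ : 0 < c₁) (hc₂ : 0 < c₂)
    (hΨpos : ∀ s : ℝ, 0 < s → 0 < Ψ s)
    (hscale : ∀ s : ℝ, 0 < s → ∀ lam : ℝ, 1 ≤ lam →
      c₁ * lam ^ μ₁ * Ψ s ≤ Ψ (lam * s) ∧ Ψ (lam * s) ≤ c₂ * lam ^ μ₂ * Ψ s)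
    (k : EuclideanSpace ℝ (Fin n) → ℝ)
    (hk : ∀ y : EuclideanSpace ℝ (Fin n), y ≠ 0 →
      k y = Ψ (‖y‖ ^ (-(2 : ℝ))) / ‖y‖ ^ (n : ℝ)) :
    ∃ C : ℝ, 0 < C ∧
      ∀ r : ℝ, 0 < r → r ≤ 1 → ∀ y : EuclideanSpace ℝ (Fin n), y ≠ 0 →
        r ^ ((n : ℝ) + 2 * μ₂) * k (r • y) ≤
          C * ((if ‖y‖ ≤ 1 then Ψ 1 * ‖y‖ ^ (-((n : ℝ) + 2 * μ₂)) else 0) +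
               (if 1 < ‖y‖ then Ψ 1 * ‖y‖ ^ (-((n : ℝ) + 2 * μ₁)) else 0)) :=
  subordinate_kernel_scaling_general n Ψ μ₁ μ₂ c₁ c₂ hμ₁₂ hc₁ hc₂ hΨpos hscale k hk
end

section
/- Suppose v : Ω → ℝ is bounded by C₀ on a bounded set Ω ⊂ ℝⁿ, and there exist constants C₁, C₂ > 0, τ ∈ (0,1), and p > 2 such that: (i) |v(z₁) − v(z₂)| ≤ C₁(1 + R^{−2})|z₁ − z₂| whenever z₁, z₂ ∈ B_{R/2}(x) with R = dist(x, Ωᶜ); and (ii) for each boundary point x₀ ∈ ∂Ω and each ρ > 0, sup_{B_ρ(x₀) ∩ Ω} v − inf_{B_ρ(x₀) ∩ Ω} v ≤ C₂ ρ^τ. Then v is Hölder continuous on Ω with exponent κ = min{τ/p, 1 − 2/p} and Hölder constant depending only on C₀, C₁, C₂, τ, p, diam(Ω). -/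
/-!
Write `d = ‖x - y‖`, `R = infDist x Ωᶜ` and `D = diam Ω + 2`, so that `d, R ≤ D`.
If `D d^(1/p) < R`, then `y` lies in `B_{R/2}(x)`, `d ≤ 1` and `d^(2/p) ≤ R²`, so the interior bound
`C₁ (1 + R⁻²) d = C₁ (d + d / R²)` is at most `2 C₁ d^κ`. Otherwise the boundary point `z` nearest
to `x` satisfies `|x - z| = R ≤ D d^(1/p)`, so `x` and `y` both lie in `B_ρ(z)` with
`ρ = 3 D d^(1/p)`, and the oscillation bound gives
`C₂ ρ^τ = C₂ (3D)^τ d^(τ/p) ≤ C₂ (3D)^τ D^(τ/p-κ) d^κ`.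
-/

open Metric

lemma rpow_le_rpow_sub_mul_rpow {d D a b : ℝ} (hd : 0 < d) (hdD : d ≤ D) (hba : b ≤ a) :
    d ^ a ≤ D ^ (a - b) * d ^ b :=
  calc d ^ a = d ^ (a - b) * d ^ b := by rw [← Real.rpow_add hd, sub_add_cancel]
    _ ≤ D ^ (a - b) * d ^ b := by gcongr

lemma le_mul_rpow_inv {d D p : ℝ} (hd : 0 < d) (hdD : d ≤ D) (hD : 1 ≤ D) (hp : 1 ≤ p) :
    d ≤ D * d ^ p⁻¹ :=
  calc d = d ^ (1 : ℝ) := (Real.rpow_one d).symm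
    _ ≤ D ^ (1 - p⁻¹) * d ^ p⁻¹ := rpow_le_rpow_sub_mul_rpow hd hdD (inv_le_one_of_one_le₀ hp)
    _ ≤ D * d ^ p⁻¹ := by
      gcongr
      exact Real.rpow_le_self_of_one_le hD (sub_le_self 1 (inv_nonneg.2 (by linarith)))

lemma one_add_inv_sq_mul_le_two_mul_rpow {d R e κ : ℝ} (hd : 0 < d) (hd1 : d ≤ 1)
    (hdR : d ^ e ≤ R ^ 2) (he : 0 ≤ e) (hκ : κ ≤ 1 - e) :
    (1 + 1 / R ^ 2) * d ≤ 2 * d ^ κ := by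
  have hde : 0 < d ^ e := Real.rpow_pos_of_pos hd e
  have h_lin : d ≤ d ^ κ := by
    simpa using Real.rpow_le_rpow_of_exponent_ge hd hd1 (show κ ≤ 1 by linarith)
  have h_sing : d / R ^ 2 ≤ d ^ κ :=
    calc d / R ^ 2 ≤ d / d ^ e := div_le_div_of_nonneg_left hd.le hde hdR
      _ = d ^ (1 - e) := by rw [Real.rpow_sub hd, Real.rpow_one]
      _ ≤ d ^ κ := Real.rpow_le_rpow_of_exponent_ge hd hd1 hκ
  calc (1 + 1 / R ^ 2) * d = d + d / R ^ 2 := by ring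
    _ ≤ 2 * d ^ κ := by linarith

section

variable {E : Type*} [SeminormedAddCommGroup E] {v : E → ℝ} {x y : E}

lemma abs_sub_le_of_mul_rpow_inv_lt {R C₁ p κ D : ℝ} (hC₁ : 0 ≤ C₁) (hp : 2 ≤ p)
    (hκ : κ ≤ 1 - 2 / p) (hD : 2 ≤ D) (hRD : R ≤ D) (hxy : 0 < ‖x - y‖)
    (hnear : D * ‖x - y‖ ^ p⁻¹ < R)
    (hint : ∀ z₁ ∈ ball x (R / 2), ∀ z₂ ∈ ball x (R / 2),
      |v z₁ - v z₂| ≤ C₁ * (1 + 1 / R ^ 2) * ‖z₁ - z₂‖) :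
    |v x - v y| ≤ 2 * C₁ * ‖x - y‖ ^ κ := by
  set d := ‖x - y‖
  have hD0 : 0 < D := by linarith
  have hR : 0 < R := (mul_pos hD0 (Real.rpow_pos_of_pos hxy _)).trans hnear
  have hs : d ^ p⁻¹ < R / D := by rw [lt_div_iff₀ hD0]; linarith
  have hs1 : d ^ p⁻¹ ≤ 1 := hs.le.trans (div_le_one_of_le₀ hRD hD0.le)
  have hd1 : d ≤ 1 := by
    rw [← Real.rpow_inv_rpow hxy.le (by linarith : p ≠ 0)]
    exact Real.rpow_le_one (by positivity) hs1 (by linarith)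
  have hds : d ≤ d ^ p⁻¹ :=
    Real.self_le_rpow_of_le_one hxy.le hd1 (inv_le_one_of_one_le₀ (by linarith))
  have hy : y ∈ ball x (R / 2) := by
    rw [mem_ball_iff_norm']
    calc d ≤ d ^ p⁻¹ := hds
      _ < R / D := hs
      _ ≤ R / 2 := div_le_div_of_nonneg_left hR.le two_pos hD
  have hsq : d ^ (2 / p) ≤ R ^ 2 :=
    calc d ^ (2 / p) = (d ^ p⁻¹) ^ 2 := by
          rw [← Real.rpow_natCast, ← Real.rpow_mul hxy.le, div_eq_inv_mul]; norm_num
      _ ≤ (R / D) ^ 2 := by gcongr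
      _ ≤ R ^ 2 := by gcongr; exact div_le_self hR.le (by linarith)
  calc |v x - v y| ≤ C₁ * (1 + 1 / R ^ 2) * d := hint x (mem_ball_self (by linarith)) y hy
    _ = C₁ * ((1 + 1 / R ^ 2) * d) := mul_assoc _ _ _
    _ ≤ C₁ * (2 * d ^ κ) := mul_le_mul_of_nonneg_left
        (one_add_inv_sq_mul_le_two_mul_rpow hxy hd1 hsq (by positivity) hκ) hC₁
    _ = 2 * C₁ * d ^ κ := by ring

lemma abs_sub_le_of_dist_le_mul_rpow_inv {Ω : Set E} {z : E} {C₂ τ p κ D : ℝ} (hC₂ : 0 ≤ C₂)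
    (hp : 1 ≤ p) (hκ : κ ≤ τ / p) (hD : 1 ≤ D) (hx : x ∈ Ω) (hy : y ∈ Ω) (hxy : 0 < ‖x - y‖)
    (hdD : ‖x - y‖ ≤ D) (hxz : dist x z ≤ D * ‖x - y‖ ^ p⁻¹)
    (hosc : ∀ ρ : ℝ, 0 < ρ → ∀ z₁ ∈ ball z ρ ∩ Ω, ∀ z₂ ∈ ball z ρ ∩ Ω, v z₁ - v z₂ ≤ C₂ * ρ ^ τ) :
    |v x - v y| ≤ C₂ * (3 * D) ^ τ * D ^ (τ / p - κ) * ‖x - y‖ ^ κ := by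
  set d := ‖x - y‖
  set ρ := 3 * D * d ^ p⁻¹
  have hs : 0 < D * d ^ p⁻¹ := by positivity
  have hxρ : x ∈ ball z ρ ∩ Ω := ⟨by rw [mem_ball]; linarith, hx⟩
  have hyρ : y ∈ ball z ρ ∩ Ω := by
    refine ⟨?_, hy⟩
    rw [mem_ball]
    calc dist y z ≤ d + dist x z := (dist_triangle y x z).trans_eq (by rw [dist_comm, dist_eq_norm])
      _ ≤ D * d ^ p⁻¹ + D * d ^ p⁻¹ := add_le_add (le_mul_rpow_inv hxy hdD hD hp) hxz
      _ < ρ := by linarith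
  calc |v x - v y| ≤ C₂ * ρ ^ τ :=
        abs_sub_le_iff.2 ⟨hosc ρ (by positivity) x hxρ y hyρ, hosc ρ (by positivity) y hyρ x hxρ⟩
    _ = C₂ * (3 * D) ^ τ * d ^ (τ / p) := by
      rw [Real.mul_rpow (by positivity) (by positivity), ← Real.rpow_mul hxy.le, inv_mul_eq_div,
        mul_assoc]
    _ ≤ C₂ * (3 * D) ^ τ * (D ^ (τ / p - κ) * d ^ κ) := by
      gcongr; exact rpow_le_rpow_sub_mul_rpow hxy hdD hκ
    _ = C₂ * (3 * D) ^ τ * D ^ (τ / p - κ) * d ^ κ := by ring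

end

theorem interpolation_global_holder_general (n : ℕ)
    (Ω : Set (EuclideanSpace ℝ (Fin n))) (hΩ : Bornology.IsBounded Ω)
    (v : EuclideanSpace ℝ (Fin n) → ℝ) (C₁ C₂ τ p : ℝ)
    (hC₁ : 0 < C₁) (hC₂ : 0 < C₂)
    (hp : 2 < p)
    (hint : ∀ x ∈ Ω, ∀ z₁ ∈ Metric.ball x (Metric.infDist x Ωᶜ / 2),
      ∀ z₂ ∈ Metric.ball x (Metric.infDist x Ωᶜ / 2),
        |v z₁ - v z₂| ≤ C₁ * (1 + 1 / (Metric.infDist x Ωᶜ) ^ 2) * ‖z₁ - z₂‖)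
    (hosc : ∀ x₀ ∈ frontier Ω, ∀ ρ : ℝ, 0 < ρ →
      ∀ z₁ ∈ Metric.ball x₀ ρ ∩ Ω, ∀ z₂ ∈ Metric.ball x₀ ρ ∩ Ω,
        v z₁ - v z₂ ≤ C₂ * ρ ^ τ) :
    ∃ C' : ℝ, 0 < C' ∧
      ∀ x ∈ Ω, ∀ y ∈ Ω,
        |v x - v y| ≤ C' * ‖x - y‖ ^ min (τ / p) (1 - 2 / p) := by
  set κ := min (τ / p) (1 - 2 / p)
  set D := diam Ω + 2
  have hD : 2 ≤ D := le_add_of_nonneg_left diam_nonneg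
  refine ⟨2 * C₁ + C₂ * (3 * D) ^ τ * D ^ (τ / p - κ), by positivity, fun x hx y hy => ?_⟩
  rcases eq_or_ne x y with rfl | hxy
  · simpa using mul_nonneg (by positivity) (Real.rpow_nonneg le_rfl κ)
  have : Nontrivial (EuclideanSpace ℝ (Fin n)) := nontrivial_of_ne x y hxy
  obtain ⟨z, hz, hRz⟩ := exists_mem_frontier_infDist_compl_eq_dist hx
    fun h => NormedSpace.unbounded_univ ℝ _ (h ▸ hΩ)
  have hd : 0 < ‖x - y‖ := norm_pos_iff.2 (sub_ne_zero.2 hxy)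
  have hdD : ‖x - y‖ ≤ D := by
    rw [← dist_eq_norm]; linarith [dist_le_diam_of_mem hΩ hx hy]
  have hRD : infDist x Ωᶜ ≤ D := by
    rw [hRz]; linarith [diam_closure Ω ▸ dist_le_diam_of_mem hΩ.closure (subset_closure hx) hz.1]
  rcases lt_or_ge (D * ‖x - y‖ ^ p⁻¹) (infDist x Ωᶜ) with hnear | hfar
  · calc |v x - v y| ≤ 2 * C₁ * ‖x - y‖ ^ κ :=
          abs_sub_le_of_mul_rpow_inv_lt hC₁.le hp.le (min_le_right _ _) hD hRD hd hnear (hint x hx)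
      _ ≤ _ := by gcongr; exact le_add_of_nonneg_right (by positivity)
  · calc |v x - v y| ≤ C₂ * (3 * D) ^ τ * D ^ (τ / p - κ) * ‖x - y‖ ^ κ :=
          abs_sub_le_of_dist_le_mul_rpow_inv hC₂.le (by linarith) (min_le_left _ _) (by linarith)
            hx hy hd hdD (hRz ▸ hfar) (hosc z hz)
      _ ≤ _ := by gcongr; exact le_add_of_nonneg_left (by positivity)

theorem interpolation_global_holder (n : ℕ)
    (Ω : Set (EuclideanSpace ℝ (Fin n))) (hΩ : Bornology.IsBounded Ω)
    (v : EuclideanSpace ℝ (Fin n) → ℝ) (C₀ C₁ C₂ τ p : ℝ)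
    (hC₀ : 0 < C₀) (hC₁ : 0 < C₁) (hC₂ : 0 < C₂)
    (hτ : 0 < τ) (hτ1 : τ < 1) (hp : 2 < p)
    (hbd : ∀ x ∈ Ω, |v x| ≤ C₀)
    (hint : ∀ x ∈ Ω, ∀ z₁ ∈ Metric.ball x (Metric.infDist x Ωᶜ / 2),
      ∀ z₂ ∈ Metric.ball x (Metric.infDist x Ωᶜ / 2),
        |v z₁ - v z₂| ≤ C₁ * (1 + 1 / (Metric.infDist x Ωᶜ) ^ 2) * ‖z₁ - z₂‖)
    (hosc : ∀ x₀ ∈ frontier Ω, ∀ ρ : ℝ, 0 < ρ →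
      ∀ z₁ ∈ Metric.ball x₀ ρ ∩ Ω, ∀ z₂ ∈ Metric.ball x₀ ρ ∩ Ω,
        v z₁ - v z₂ ≤ C₂ * ρ ^ τ) :
    ∃ C' : ℝ, 0 < C' ∧
      ∀ x ∈ Ω, ∀ y ∈ Ω,
        |v x - v y| ≤ C' * ‖x - y‖ ^ min (τ / p) (1 - 2 / p) :=
  interpolation_global_holder_general n Ω hΩ v C₁ C₂ τ p hC₁ hC₂ hp hint hosc
end

section
/- Let δ, v : Ω → ℝ with 0 ≤ δ(x) = dist(x, Ωᶜ) on a bounded open Ω ⊂ ℝⁿ, and suppose there exist constants C > 0, κ ∈ (0,1), η ∈ (0, κ) such that |∇v(x)| ≤ C δ(x)^{κ−1} for all x ∈ Ω, and |∇v(x) − ∇v(y)| ≤ C δ(x)^{κ−1−η} |x−y|^η whenever |x − y| ≤ δ(x)/8. Assume also v ∈ C¹(Ω). Then the function ϑ = δ·∇v satisfies |ϑ(x) − ϑ(y)| ≤ C' |x − y|^η for all x, y ∈ Ω, where C' depends only on C, κ, η. -/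
/-!
Write `r = ‖x - y‖` and `M = C D^(κ-η)` with `D` a bound for `δ` on the bounded set `Ω`.
Since `δ ≤ D` and `η ≤ κ`, the gradient bound gives `δ ‖∇v‖ ≤ C δ^κ ≤ M δ^η`.
If `r > δ(x)/8`, then `δ(x) < 8r` and, `δ` being 1-Lipschitz, `δ(y) < 9r`, so each of
`ϑ(x)`, `ϑ(y)` is already `O(M r^η)`. If `r ≤ δ(x)/8`, split
`ϑ(x) - ϑ(y) = (δ(x) - δ(y)) ∇v(x) + δ(y) (∇v(x) - ∇v(y))`: the first term is at most
`r C δ(x)^(κ-1) ≤ C δ(x)^(κ-η) r^η` because `r ≤ r^η δ(x)^(1-η)`, and the second at most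
`2 δ(x) · C δ(x)^(κ-1-η) r^η` by the interior Hölder bound.
-/

open Metric

lemma norm_smul_sub_smul_le {F : Type*} [SeminormedAddCommGroup F] [NormedSpace ℝ F]
    (a b : ℝ) (u w : F) : ‖a • u - b • w‖ ≤ |a - b| * ‖u‖ + |b| * ‖u - w‖ := by
  have h : a • u - b • w = (a - b) • u + b • (u - w) := by module
  rw [h, ← Real.norm_eq_abs, ← Real.norm_eq_abs, ← norm_smul, ← norm_smul]
  exact norm_add_le _ _

namespace Real

lemma rpow_le_mul_rpow_of_le_mul {d a r η : ℝ} (hd : 0 ≤ d) (ha : 1 ≤ a) (hr : 0 ≤ r)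
    (hη₀ : 0 ≤ η) (hη₁ : η ≤ 1) (h : d ≤ a * r) : d ^ η ≤ a * r ^ η :=
  calc d ^ η ≤ (a * r) ^ η := rpow_le_rpow hd h hη₀
    _ = a ^ η * r ^ η := mul_rpow (by linarith) hr
    _ ≤ a * r ^ η := by gcongr; exact rpow_le_self_of_one_le ha hη₁

lemma le_rpow_mul_rpow_one_sub {r d η : ℝ} (hr : 0 ≤ r) (hrd : r ≤ d) (hη₁ : η ≤ 1) :
    r ≤ r ^ η * d ^ (1 - η) :=
  calc r = r ^ η * r ^ (1 - η) := by
        rw [← rpow_add' hr (by norm_num), add_sub_cancel, rpow_one]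
    _ ≤ r ^ η * d ^ (1 - η) := by gcongr

lemma mul_rpow_sub_one {d : ℝ} (hd : 0 < d) (a : ℝ) : d * d ^ (a - 1) = d ^ a := by
  rw [rpow_sub_one hd.ne']
  field_simp

lemma mul_le_of_le_mul_rpow_sub_one {d D m C κ η : ℝ} (hd : 0 < d) (hdD : d ≤ D)
    (hC : 0 ≤ C) (hηκ : η ≤ κ) (hm : m ≤ C * d ^ (κ - 1)) :
    d * m ≤ C * D ^ (κ - η) * d ^ η :=
  calc d * m ≤ d * (C * d ^ (κ - 1)) := by gcongr
    _ = C * d ^ (κ - η) * d ^ η := by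
      rw [mul_left_comm, mul_rpow_sub_one hd, mul_assoc, ← rpow_add hd, sub_add_cancel]
    _ ≤ C * D ^ (κ - η) * d ^ η := by gcongr

end Real

open Real

section WeightedHolder

variable {E F : Type*} [SeminormedAddCommGroup E] [SeminormedAddCommGroup F] [NormedSpace ℝ F]

lemma norm_smul_sub_smul_le_of_far {Ω : Set E} {δ : E → ℝ} {g : E → F} {D C κ η : ℝ}
    (hδ : LipschitzWith 1 δ) (hδpos : ∀ x ∈ Ω, 0 < δ x) (hδD : ∀ x ∈ Ω, δ x ≤ D)
    (hC : 0 ≤ C) (hη₀ : 0 ≤ η) (hη₁ : η ≤ 1) (hηκ : η ≤ κ)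
    (hg : ∀ x ∈ Ω, ‖g x‖ ≤ C * δ x ^ (κ - 1))
    {x y : E} (hx : x ∈ Ω) (hy : y ∈ Ω) (hxy : δ x / 8 < ‖x - y‖) :
    ‖δ x • g x - δ y • g y‖ ≤ 17 * (C * D ^ (κ - η)) * ‖x - y‖ ^ η := by
  set r := ‖x - y‖
  have hM : 0 ≤ C * D ^ (κ - η) :=
    mul_nonneg hC (rpow_nonneg ((hδpos x hx).le.trans (hδD x hx)) _)
  have hδy : δ y ≤ 9 * r := by
    have := hδ.norm_sub_le y x
    rw [norm_sub_rev y x, Real.norm_eq_abs, NNReal.coe_one, one_mul] at this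
    linarith [le_abs_self (δ y - δ x)]
  have bound : ∀ w ∈ Ω, ∀ a : ℝ, 1 ≤ a → δ w ≤ a * r →
      ‖δ w • g w‖ ≤ a * (C * D ^ (κ - η)) * r ^ η := by
    intro w hw a ha hwa
    rw [norm_smul, Real.norm_eq_abs, abs_of_pos (hδpos w hw)]
    calc δ w * ‖g w‖ ≤ C * D ^ (κ - η) * δ w ^ η :=
          mul_le_of_le_mul_rpow_sub_one (hδpos w hw) (hδD w hw) hC hηκ (hg w hw)
      _ ≤ C * D ^ (κ - η) * (a * r ^ η) := by
          gcongr
          exact rpow_le_mul_rpow_of_le_mul (hδpos w hw).le ha (norm_nonneg _) hη₀ hη₁ hwa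
      _ = a * (C * D ^ (κ - η)) * r ^ η := by ring
  calc ‖δ x • g x - δ y • g y‖ ≤ ‖δ x • g x‖ + ‖δ y • g y‖ := norm_sub_le _ _
    _ ≤ 8 * (C * D ^ (κ - η)) * r ^ η + 9 * (C * D ^ (κ - η)) * r ^ η :=
        add_le_add (bound x hx 8 (by norm_num) (by linarith))
          (bound y hy 9 (by norm_num) hδy)
    _ = 17 * (C * D ^ (κ - η)) * r ^ η := by ring

lemma norm_smul_sub_smul_le_of_near {Ω : Set E} {δ : E → ℝ} {g : E → F} {D C κ η : ℝ}
    (hδ : LipschitzWith 1 δ) (hδpos : ∀ x ∈ Ω, 0 < δ x) (hδD : ∀ x ∈ Ω, δ x ≤ D)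
    (hC : 0 ≤ C) (hη₁ : η ≤ 1) (hηκ : η ≤ κ)
    (hg : ∀ x ∈ Ω, ‖g x‖ ≤ C * δ x ^ (κ - 1))
    (hgHolder : ∀ x ∈ Ω, ∀ y ∈ Ω, ‖x - y‖ ≤ δ x / 8 →
      ‖g x - g y‖ ≤ C * δ x ^ (κ - 1 - η) * ‖x - y‖ ^ η)
    {x y : E} (hx : x ∈ Ω) (hy : y ∈ Ω) (hxy : ‖x - y‖ ≤ δ x / 8) :
    ‖δ x • g x - δ y • g y‖ ≤ 3 * (C * D ^ (κ - η)) * ‖x - y‖ ^ η := by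
  set r := ‖x - y‖
  have hδx := hδpos x hx
  have hr : 0 ≤ r := norm_nonneg _
  have hδxy : |δ x - δ y| ≤ r := by
    simpa [Real.norm_eq_abs] using hδ.norm_sub_le x y
  have hδy : |δ y| ≤ 2 * δ x := by
    rw [abs_of_pos (hδpos y hy)]
    linarith [neg_abs_le (δ x - δ y)]
  have first : |δ x - δ y| * ‖g x‖ ≤ C * δ x ^ (κ - η) * r ^ η :=
    calc |δ x - δ y| * ‖g x‖ ≤ r * (C * δ x ^ (κ - 1)) := by gcongr; exact hg x hx
      _ ≤ (r ^ η * δ x ^ (1 - η)) * (C * δ x ^ (κ - 1)) := by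
          gcongr; exact le_rpow_mul_rpow_one_sub hr (by linarith) hη₁
      _ = C * δ x ^ (κ - η) * r ^ η := by
          rw [show κ - η = (1 - η) + (κ - 1) by ring, rpow_add hδx]; ring
  have second : |δ y| * ‖g x - g y‖ ≤ 2 * (C * δ x ^ (κ - η) * r ^ η) :=
    calc |δ y| * ‖g x - g y‖ ≤ (2 * δ x) * (C * δ x ^ (κ - 1 - η) * r ^ η) := by
          gcongr; exact hgHolder x hx y hy hxy
      _ = 2 * (C * δ x ^ (κ - η) * r ^ η) := by
          rw [show κ - 1 - η = (κ - η) - 1 by ring, ← mul_rpow_sub_one hδx (κ - η)]; ring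
  calc ‖δ x • g x - δ y • g y‖ ≤ |δ x - δ y| * ‖g x‖ + |δ y| * ‖g x - g y‖ :=
        norm_smul_sub_smul_le _ _ _ _
    _ ≤ 3 * (C * δ x ^ (κ - η)) * r ^ η := by linarith
    _ ≤ 3 * (C * D ^ (κ - η)) * r ^ η := by gcongr; exact hδD x hx

theorem norm_smul_sub_smul_le_of_weighted_holder {Ω : Set E} {δ : E → ℝ} {g : E → F}
    {D C κ η : ℝ} (hδ : LipschitzWith 1 δ) (hδpos : ∀ x ∈ Ω, 0 < δ x)
    (hδD : ∀ x ∈ Ω, δ x ≤ D) (hC : 0 ≤ C) (hη₀ : 0 ≤ η) (hη₁ : η ≤ 1) (hηκ : η ≤ κ)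
    (hg : ∀ x ∈ Ω, ‖g x‖ ≤ C * δ x ^ (κ - 1))
    (hgHolder : ∀ x ∈ Ω, ∀ y ∈ Ω, ‖x - y‖ ≤ δ x / 8 →
      ‖g x - g y‖ ≤ C * δ x ^ (κ - 1 - η) * ‖x - y‖ ^ η)
    {x y : E} (hx : x ∈ Ω) (hy : y ∈ Ω) :
    ‖δ x • g x - δ y • g y‖ ≤ 17 * (C * D ^ (κ - η)) * ‖x - y‖ ^ η := by
  rcases le_or_gt ‖x - y‖ (δ x / 8) with hxy | hxy
  · have hM : 0 ≤ C * D ^ (κ - η) * ‖x - y‖ ^ η := by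
      have := (hδpos x hx).le.trans (hδD x hx)
      positivity
    linarith [norm_smul_sub_smul_le_of_near hδ hδpos hδD hC hη₁ hηκ hg hgHolder hx hy hxy]
  · exact norm_smul_sub_smul_le_of_far hδ hδpos hδD hC hη₀ hη₁ hηκ hg hx hy hxy

end WeightedHolder

lemma exists_pos_infDist_compl_le {E : Type*} [PseudoMetricSpace E] {Ω : Set E}
    (hΩ : Bornology.IsBounded Ω) : ∃ D > 0, ∀ x ∈ Ω, infDist x Ωᶜ ≤ D := by
  rcases Ωᶜ.eq_empty_or_nonempty with hc | ⟨z, hz⟩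
  · exact ⟨1, one_pos, fun x _ => by simp [hc]⟩
  obtain ⟨R, hR⟩ := hΩ.subset_closedBall z
  refine ⟨max R 1, by positivity, fun x hx => ?_⟩
  calc infDist x Ωᶜ ≤ dist x z := infDist_le_dist_of_mem hz
    _ ≤ max R 1 := (mem_closedBall.mp (hR hx)).trans (le_max_left _ _)

theorem delta_grad_holder_general (n : ℕ)
    (Ω : Set (EuclideanSpace ℝ (Fin n))) (hΩb : Bornology.IsBounded Ω)
    (hΩo : IsOpen Ω)
    (δ : EuclideanSpace ℝ (Fin n) → ℝ)
    (hδ : ∀ x, δ x = Metric.infDist x Ωᶜ)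
    (v : EuclideanSpace ℝ (Fin n) → ℝ)
    (C κ η : ℝ) (hC : 0 < C) (hκ1 : κ < 1)
    (hη : 0 < η) (hηκ : η < κ)
    (hgrad : ∀ x ∈ Ω, ‖fderiv ℝ v x‖ ≤ C * δ x ^ (κ - 1))
    (hgradHolder : ∀ x ∈ Ω, ∀ y ∈ Ω, ‖x - y‖ ≤ δ x / 8 →
      ‖fderiv ℝ v x - fderiv ℝ v y‖ ≤ C * δ x ^ (κ - 1 - η) * ‖x - y‖ ^ η)
    (ϑ : EuclideanSpace ℝ (Fin n) → EuclideanSpace ℝ (Fin n) →L[ℝ] ℝ)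
    (hϑ : ∀ x, ϑ x = δ x • fderiv ℝ v x) :
    ∃ C' : ℝ, 0 < C' ∧
      ∀ x ∈ Ω, ∀ y ∈ Ω, ‖ϑ x - ϑ y‖ ≤ C' * ‖x - y‖ ^ η := by
  obtain ⟨D, hD, hδD⟩ := exists_pos_infDist_compl_le hΩb
  simp only [← hδ] at hδD
  refine ⟨17 * (C * D ^ (κ - η)), by positivity, fun x hx y hy => ?_⟩
  rw [hϑ, hϑ]
  rcases Ωᶜ.eq_empty_or_nonempty with hc | hc
  · have hδ0 : ∀ z, δ z = 0 := fun z => by rw [hδ, hc, infDist_empty]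
    simp only [hδ0, zero_smul, sub_zero, norm_zero]
    positivity
  have hδpos : ∀ x ∈ Ω, 0 < δ x := fun x hx => by
    rw [hδ]
    exact (hΩo.isClosed_compl.notMem_iff_infDist_pos hc).mp (not_not_intro hx)
  have hδLip : LipschitzWith 1 δ := by
    simpa only [← funext hδ] using lipschitz_infDist_pt Ωᶜ
  exact norm_smul_sub_smul_le_of_weighted_holder hδLip hδpos hδD hC.le hη.le
    (hηκ.trans hκ1).le hηκ.le hgrad hgradHolder hx hy

theorem delta_grad_holder (n : ℕ)
    (Ω : Set (EuclideanSpace ℝ (Fin n))) (hΩb : Bornology.IsBounded Ω)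
    (hΩo : IsOpen Ω)
    (δ : EuclideanSpace ℝ (Fin n) → ℝ)
    (hδ : ∀ x, δ x = Metric.infDist x Ωᶜ)
    (v : EuclideanSpace ℝ (Fin n) → ℝ)
    (C κ η : ℝ) (hC : 0 < C) (hκ : 0 < κ) (hκ1 : κ < 1)
    (hη : 0 < η) (hηκ : η < κ)
    (hv : ∀ x ∈ Ω, DifferentiableAt ℝ v x)
    (hgrad : ∀ x ∈ Ω, ‖fderiv ℝ v x‖ ≤ C * δ x ^ (κ - 1))
    (hgradHolder : ∀ x ∈ Ω, ∀ y ∈ Ω, ‖x - y‖ ≤ δ x / 8 →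
      ‖fderiv ℝ v x - fderiv ℝ v y‖ ≤ C * δ x ^ (κ - 1 - η) * ‖x - y‖ ^ η)
    (ϑ : EuclideanSpace ℝ (Fin n) → EuclideanSpace ℝ (Fin n) →L[ℝ] ℝ)
    (hϑ : ∀ x, ϑ x = δ x • fderiv ℝ v x) :
    ∃ C' : ℝ, 0 < C' ∧
      ∀ x ∈ Ω, ∀ y ∈ Ω, ‖ϑ x - ϑ y‖ ≤ C' * ‖x - y‖ ^ η :=
  delta_grad_holder_general n Ω hΩb hΩo δ hδ v C κ η hC hκ1 hη hηκ hgrad hgradHolder ϑ hϑ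
end

section
/- Let u : ℝⁿ → ℝ be anti-symmetric with respect to reflection R across the hyperplane {x·e = λ}, i.e., u(R(x)) = −u(x) for all x, and let k : (0,∞) → (0,∞) be strictly decreasing. Let H = {x : x·e > λ} and suppose x ∈ H with u(x) = 0 and u ≥ 0 on H. Then ∫_{ℝⁿ} (u(y) − u(x)) k(|y − x|) dy = ∫_{H} u(y) ( k(|y − x|) − k(|R(y) − x|) ) dy ≥ 0, and it equals 0 only if u ≡ 0 on H. -/
open MeasureTheory
open scoped RealInnerProductSpace

/-!
Splitting `ℝⁿ` into the half-space `H` and its complement (the hyperplane is null) and pulling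
the integral over the complement back to `H` by the measure-preserving reflection `R`, the
anti-symmetry `u ∘ R = -u` turns `∫ u(y) k(|y - x|)` into
`∫_H u(y) (k(|y - x|) - k(|R y - x|))`. For `x, y ∈ H` one has
`|R y - x|² = |y - x|² + 4 (⟪y, e⟫ - λ) (⟪x, e⟫ - λ)`, so the kernel difference is positive
off `y = x`, where `u` vanishes anyway. Hence the integrand is nonnegative, and if the integral
is zero then `u` vanishes a.e. on the open set `H`, hence everywhere on `H` by continuity.
-/

open Set

variable {E : Type*} [NormedAddCommGroup E] [InnerProductSpace ℝ E]

def hyperplaneReflection (e : E) (c : ℝ) (y : E) : E := y - (2 * ⟪y, e⟫ - 2 * c) • e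

section Reflection

variable {e : E} {c : ℝ}

theorem inner_hyperplaneReflection (he : ‖e‖ = 1) (y : E) :
    ⟪hyperplaneReflection e c y, e⟫ = 2 * c - ⟪y, e⟫ := by
  rw [hyperplaneReflection, inner_sub_left, real_inner_smul_left, real_inner_self_eq_norm_sq, he]
  ring

theorem hyperplaneReflection_eq_reflection_add (he : ‖e‖ = 1) (y : E) :
    hyperplaneReflection e c y = (ℝ ∙ e)ᗮ.reflection y + (2 * c) • e := by
  rw [Submodule.reflection_orthogonal_apply, Submodule.reflection_singleton_apply, he,
    hyperplaneReflection, real_inner_comm]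
  push_cast
  module

theorem preimage_hyperplaneReflection_halfSpace (he : ‖e‖ = 1) :
    hyperplaneReflection e c ⁻¹' {y | ⟪y, e⟫ < c} = {y | c < ⟪y, e⟫} := by
  ext y
  simp only [mem_preimage, mem_ofPred_eq, inner_hyperplaneReflection he]
  constructor <;> intro h <;> linarith

theorem norm_hyperplaneReflection_sub_sq (he : ‖e‖ = 1) (x y : E) :
    ‖hyperplaneReflection e c y - x‖ ^ 2
      = ‖y - x‖ ^ 2 + 4 * (⟪y, e⟫ - c) * (⟪x, e⟫ - c) := by
  have hsub : hyperplaneReflection e c y - x = (y - x) - (2 * ⟪y, e⟫ - 2 * c) • e := by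
    rw [hyperplaneReflection]; abel
  rw [hsub, norm_sub_sq_real, real_inner_smul_right, inner_sub_left, norm_smul,
    Real.norm_eq_abs, he, mul_one, sq_abs]
  ring

theorem norm_sub_lt_norm_hyperplaneReflection_sub (he : ‖e‖ = 1) {x y : E}
    (hx : c < ⟪x, e⟫) (hy : c < ⟪y, e⟫) : ‖y - x‖ < ‖hyperplaneReflection e c y - x‖ := by
  refine lt_of_pow_lt_pow_left₀ 2 (norm_nonneg _) ?_
  rw [norm_hyperplaneReflection_sub_sq he]
  nlinarith [mul_pos (sub_pos.2 hy) (sub_pos.2 hx)]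

theorem isOpen_setOf_lt_inner : IsOpen {y : E | c < ⟪y, e⟫} :=
  isOpen_lt continuous_const (by fun_prop)

variable [MeasurableSpace E] [BorelSpace E]

theorem measurableEmbedding_hyperplaneReflection (he : ‖e‖ = 1) :
    MeasurableEmbedding (hyperplaneReflection e c) := by
  rw [funext (hyperplaneReflection_eq_reflection_add he)]
  exact (Homeomorph.addRight _).measurableEmbedding.comp
    (ℝ ∙ e)ᗮ.reflection.toHomeomorph.measurableEmbedding

variable [FiniteDimensional ℝ E]

theorem volume_setOf_inner_eq (he : e ≠ 0) : volume {y : E | ⟪y, e⟫ = c} = 0 := by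
  rcases eq_empty_or_nonempty {y : E | ⟪y, e⟫ = c} with hP | ⟨p, hp⟩
  · rw [hP, measure_empty]
  have hP : {y : E | ⟪y, e⟫ = c} = (· + -p) ⁻¹' ((ℝ ∙ e)ᗮ : Submodule ℝ E) := by
    ext y
    change ⟪y, e⟫ = c ↔ _
    rw [mem_preimage, SetLike.mem_coe, Submodule.mem_orthogonal_singleton_iff_inner_right,
      inner_add_right, inner_neg_right, real_inner_comm y, real_inner_comm p, hp.out,
      ← sub_eq_add_neg, sub_eq_zero]
  have hK : (ℝ ∙ e)ᗮ ≠ ⊤ := by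
    rwa [Ne, Submodule.orthogonal_eq_top_iff, Submodule.span_singleton_eq_bot]
  rw [hP, measure_preimage_add_right, Measure.addHaar_submodule volume _ hK]

theorem measurePreserving_hyperplaneReflection (he : ‖e‖ = 1) :
    MeasurePreserving (hyperplaneReflection e c) := by
  rw [funext (hyperplaneReflection_eq_reflection_add he)]
  exact (measurePreserving_add_right volume _).comp (LinearIsometryEquiv.measurePreserving _)

theorem compl_halfSpace_ae_eq (he : e ≠ 0) :
    ({y : E | c < ⟪y, e⟫}ᶜ : Set E) =ᵐ[volume] {y | ⟪y, e⟫ < c} := by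
  refine (ae_eq_set.2 ⟨measure_mono_null ?_ (volume_setOf_inner_eq (c := c) he), ?_⟩)
  · intro y ⟨h1, h2⟩
    simp only [mem_compl_iff, mem_ofPred_eq, not_lt] at h1 h2
    exact le_antisymm h1 h2
  · have hsub : {y : E | ⟪y, e⟫ < c} ⊆ {y | c < ⟪y, e⟫}ᶜ := fun y (hy : ⟪y, e⟫ < c) =>
      not_lt.2 hy.le
    rw [sdiff_eq_empty.2 hsub, measure_empty]

theorem integrable_comp_hyperplaneReflection_iff {F : Type*} [NormedAddCommGroup F]
    (he : ‖e‖ = 1) {f : E → F} : Integrable (f ∘ hyperplaneReflection e c) ↔ Integrable f :=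
  (measurePreserving_hyperplaneReflection he).integrable_comp_emb
    (measurableEmbedding_hyperplaneReflection he)

theorem integral_eq_setIntegral_add_comp_hyperplaneReflection {F : Type*}
    [NormedAddCommGroup F] [NormedSpace ℝ F] (he : ‖e‖ = 1) {f : E → F} (hf : Integrable f) :
    ∫ y, f y = ∫ y in {y | c < ⟪y, e⟫}, (f y + f (hyperplaneReflection e c y)) := by
  have he0 : e ≠ 0 := norm_ne_zero_iff.1 (he ▸ one_ne_zero)
  have hfR := (integrable_comp_hyperplaneReflection_iff (c := c) he).2 hf
  rw [← integral_add_compl isOpen_setOf_lt_inner.measurableSet hf,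
    setIntegral_congr_set (compl_halfSpace_ae_eq he0),
    ← (measurePreserving_hyperplaneReflection he).setIntegral_preimage_emb
      (measurableEmbedding_hyperplaneReflection he) _ {y | ⟪y, e⟫ < c},
    preimage_hyperplaneReflection_halfSpace he]
  exact (integral_add hf.integrableOn hfR.integrableOn).symm

theorem integrableOn_mul_sub_comp_hyperplaneReflection (he : ‖e‖ = 1) {u K : E → ℝ}
    (hanti : ∀ y, u (hyperplaneReflection e c y) = -u y)
    (hint : Integrable fun y => u y * K y) :
    IntegrableOn (fun y => u y * (K y - K (hyperplaneReflection e c y))) {y | c < ⟪y, e⟫} := by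
  have hint' := (integrable_comp_hyperplaneReflection_iff (c := c) he).2 hint
  refine (hint.add hint').integrableOn.congr_fun (fun y _ => ?_)
    isOpen_setOf_lt_inner.measurableSet
  simp only [Pi.add_apply, Function.comp_apply, hanti]
  ring

theorem integral_mul_eq_setIntegral_mul_sub_comp_hyperplaneReflection (he : ‖e‖ = 1)
    {u K : E → ℝ} (hanti : ∀ y, u (hyperplaneReflection e c y) = -u y)
    (hint : Integrable fun y => u y * K y) :
    ∫ y, u y * K y
      = ∫ y in {y | c < ⟪y, e⟫}, u y * (K y - K (hyperplaneReflection e c y)) := by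
  rw [integral_eq_setIntegral_add_comp_hyperplaneReflection (c := c) he hint]
  simp only [hanti, neg_mul, ← sub_eq_add_neg, mul_sub]

end Reflection

theorem StrictAntiOn.apply_norm_hyperplaneReflection_sub_lt {k : ℝ → ℝ}
    (hk : StrictAntiOn k (Ioi 0)) {e x y : E} {c : ℝ} (he : ‖e‖ = 1) (hx : c < ⟪x, e⟫)
    (hy : c < ⟪y, e⟫) (hyx : y ≠ x) : k ‖hyperplaneReflection e c y - x‖ < k ‖y - x‖ := by
  have hlt := norm_sub_lt_norm_hyperplaneReflection_sub he hx hy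
  have hpos : 0 < ‖y - x‖ := norm_pos_iff.2 (sub_ne_zero.2 hyx)
  exact hk hpos (hpos.trans hlt) hlt

theorem eqOn_zero_of_setIntegral_eq_zero {X : Type*} [TopologicalSpace X] [MeasurableSpace X]
    [OpensMeasurableSpace X] {μ : Measure X} [μ.IsOpenPosMeasure] {U : Set X} {g u : X → ℝ}
    (hU : IsOpen U) (hu : ContinuousOn u U) (hg : ∀ y ∈ U, 0 ≤ g y)
    (hgu : ∀ y ∈ U, g y = 0 → u y = 0) (hint : IntegrableOn g U μ) (h : ∫ y in U, g y ∂μ = 0) :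
    EqOn u 0 U := by
  have hg0 : g =ᵐ[μ.restrict U] 0 :=
    (setIntegral_eq_zero_iff_of_nonneg_ae
      ((ae_restrict_iff' hU.measurableSet).2 (.of_forall hg)) hint).1 h
  refine Measure.eqOn_open_of_ae_eq (μ := μ) ?_ hU hu continuousOn_const
  filter_upwards [hg0, ae_restrict_mem hU.measurableSet] with y hy hyU
  exact hgu y hyU hy

theorem antisymmetric_kernel_symmetrization_general (n : ℕ)
    (e : EuclideanSpace ℝ (Fin n)) (he : ‖e‖ = 1) (lam : ℝ)
    (R : EuclideanSpace ℝ (Fin n) → EuclideanSpace ℝ (Fin n))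
    (hR : ∀ y, R y = y - (2 * ⟪y, e⟫ - 2 * lam) • e)
    (H : Set (EuclideanSpace ℝ (Fin n))) (hH : H = {y | lam < ⟪y, e⟫})
    (u : EuclideanSpace ℝ (Fin n) → ℝ)
    (hu_cont : Continuous u)
    (hanti : ∀ y, u (R y) = -u y)
    (k : ℝ → ℝ)
    (hkanti : StrictAntiOn k (Set.Ioi 0))
    (x : EuclideanSpace ℝ (Fin n)) (hx : x ∈ H)
    (hux : u x = 0) (hunn : ∀ y ∈ H, 0 ≤ u y)
    (hint1 : Integrable (fun y => (u y - u x) * k ‖y - x‖)) :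
    (∫ y, (u y - u x) * k ‖y - x‖)
        = (∫ y in H, u y * (k ‖y - x‖ - k ‖R y - x‖)) ∧
      0 ≤ ∫ y, (u y - u x) * k ‖y - x‖ ∧
      ((∫ y, (u y - u x) * k ‖y - x‖) = 0 → ∀ y ∈ H, u y = 0) := by
  obtain rfl : R = hyperplaneReflection e lam := funext hR
  simp only [hux, sub_zero] at hint1 ⊢
  set F := fun y => u y * (k ‖y - x‖ - k ‖hyperplaneReflection e lam y - x‖)
  have hHopen : IsOpen H := hH ▸ isOpen_setOf_lt_inner
  have hkey : ∫ y, u y * k ‖y - x‖ = ∫ y in H, F y :=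
    hH ▸ integral_mul_eq_setIntegral_mul_sub_comp_hyperplaneReflection he hanti hint1
  have hint : IntegrableOn F H :=
    hH ▸ integrableOn_mul_sub_comp_hyperplaneReflection he hanti hint1
  have hkernel : ∀ y ∈ H, y ≠ x →
      0 < k ‖y - x‖ - k ‖hyperplaneReflection e lam y - x‖ := by
    subst hH
    exact fun y hy hyx =>
      sub_pos.2 (hkanti.apply_norm_hyperplaneReflection_sub_lt he hx hy hyx)
  have hnonneg : ∀ y ∈ H, 0 ≤ F y := fun y hy => by
    rcases eq_or_ne y x with rfl | hyx
    · simp only [F, hux, zero_mul, le_refl]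
    · exact mul_nonneg (hunn y hy) (hkernel y hy hyx).le
  have hzero : ∀ y ∈ H, F y = 0 → u y = 0 := fun y hy hFy => by
    rcases eq_or_ne y x with rfl | hyx
    · exact hux
    · exact (mul_eq_zero.1 hFy).resolve_right (hkernel y hy hyx).ne'
  refine ⟨hkey, hkey ▸ setIntegral_nonneg hHopen.measurableSet hnonneg, fun h0 => ?_⟩
  exact eqOn_zero_of_setIntegral_eq_zero hHopen hu_cont.continuousOn hnonneg hzero hint
    (hkey ▸ h0)

theorem antisymmetric_kernel_symmetrization (n : ℕ) (hn : 1 ≤ n)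
    (e : EuclideanSpace ℝ (Fin n)) (he : ‖e‖ = 1) (lam : ℝ)
    (R : EuclideanSpace ℝ (Fin n) → EuclideanSpace ℝ (Fin n))
    (hR : ∀ y, R y = y - (2 * ⟪y, e⟫ - 2 * lam) • e)
    (H : Set (EuclideanSpace ℝ (Fin n))) (hH : H = {y | lam < ⟪y, e⟫})
    (u : EuclideanSpace ℝ (Fin n) → ℝ)
    (hu_cont : Continuous u) (hu_supp : HasCompactSupport u)
    (hanti : ∀ y, u (R y) = -u y)
    (k : ℝ → ℝ) (hkpos : ∀ t : ℝ, 0 < t → 0 < k t)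
    (hkanti : StrictAntiOn k (Set.Ioi 0))
    (x : EuclideanSpace ℝ (Fin n)) (hx : x ∈ H)
    (hux : u x = 0) (hunn : ∀ y ∈ H, 0 ≤ u y)
    (hint1 : Integrable (fun y => (u y - u x) * k ‖y - x‖))
    (hint2 : IntegrableOn (fun y => u y * (k ‖y - x‖ - k ‖R y - x‖)) H) :
    (∫ y, (u y - u x) * k ‖y - x‖)
        = (∫ y in H, u y * (k ‖y - x‖ - k ‖R y - x‖)) ∧
      0 ≤ ∫ y, (u y - u x) * k ‖y - x‖ ∧
      ((∫ y, (u y - u x) * k ‖y - x‖) = 0 → ∀ y ∈ H, u y = 0) :=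
  antisymmetric_kernel_symmetrization_general n e he lam R hR H hH u hu_cont hanti k hkanti x hx hux
    hunn hint1
end
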